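/- Let A be an invertible n×n complex matrix with CMJD A = E H U (E elliptic, U unipotent), and let B, M be invertible n×n complex matrices. Then lim_{m→∞} s_n(B E^m U^m M)^{1/m} = 1 = lim_{m→∞} s_1(B E^m U^m M)^{1/m}. -/

import Mathlib

open Matrix Filter Topology
open scoped ComplexOrder

/-- `matAbs X = (Xᴴ X)^{1/2}`, the positive semidefinite part of the polar decomposition. -/
noncomputable def matAbs {n : ℕ} (X : Matrix (Fin n) (Fin n) ℂ) : Matrix (Fin n) (Fin n) ℂ :=
  (Matrix.posSemidef_conjTranspose_mul_self X).1.eigenvectorUnitary.1 *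
    Matrix.diagonal ((↑) ∘ (Real.sqrt ∘ (Matrix.posSemidef_conjTranspose_mul_self X).1.eigenvalues)) *
    (star (Matrix.posSemidef_conjTranspose_mul_self X).1.eigenvectorUnitary : Matrix (Fin n) (Fin n) ℂ)

/-- The largest singular value (spectral norm). -/
noncomputable def sMax {n : ℕ} (B : Matrix (Fin n) (Fin n) ℂ) : ℝ :=
  ⨆ i, Real.sqrt ((Matrix.posSemidef_conjTranspose_mul_self B).1.eigenvalues i)

/-- The smallest singular value. -/
noncomputable def sMin {n : ℕ} (B : Matrix (Fin n) (Fin n) ℂ) : ℝ :=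
  ⨅ i, Real.sqrt ((Matrix.posSemidef_conjTranspose_mul_self B).1.eigenvalues i)

/-- The spectral radius: the largest modulus of an eigenvalue. -/
noncomputable def specRad {n : ℕ} (B : Matrix (Fin n) (Fin n) ℂ) : ℝ :=
  sSup ((fun z => ‖z‖) '' spectrum ℂ B)

/-- A matrix is elliptic if it is diagonalizable with all eigenvalues of modulus one. -/
def Elliptic {n : ℕ} (E : Matrix (Fin n) (Fin n) ℂ) : Prop :=
  ∃ (M : Matrix (Fin n) (Fin n) ℂ) (t : Fin n → ℂ),
    IsUnit M.det ∧ (∀ i, ‖t i‖ = 1) ∧ E = M * Matrix.diagonal t * M⁻¹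

/-- A matrix is hyperbolic if it is diagonalizable with all eigenvalues real and positive. -/
def Hyperbolic {n : ℕ} (H : Matrix (Fin n) (Fin n) ℂ) : Prop :=
  ∃ (M : Matrix (Fin n) (Fin n) ℂ) (t : Fin n → ℝ),
    IsUnit M.det ∧ (∀ i, 0 < t i) ∧ H = M * Matrix.diagonal (fun i => (t i : ℂ)) * M⁻¹

/-- A matrix is unipotent if all its eigenvalues are one, i.e. `U - 1` is nilpotent. -/
def Unipotent {n : ℕ} (U : Matrix (Fin n) (Fin n) ℂ) : Prop :=
  IsNilpotent (U - 1)

/-- The Euclidean norm on `ℂⁿ`. -/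
noncomputable def enorm {n : ℕ} (v : Fin n → ℂ) : ℝ :=
  Real.sqrt (∑ i, ‖v i‖ ^ 2)

/- ### Auxiliary lemmas -/

open Polynomial in
private lemma aux_charpoly_nilp {n : ℕ} (N : Matrix (Fin n) (Fin n) ℂ) (h : IsNilpotent N) :
    N.charpoly = X ^ n := by
  have h2 := Matrix.isNilpotent_charpoly_sub_pow_of_isNilpotent h
  rw [← sub_eq_zero]
  simpa using h2.eq_zero

private lemma aux_det_unipotent {n : ℕ} (U : Matrix (Fin n) (Fin n) ℂ)
    (h : IsNilpotent (U - 1)) : U.det = 1 := by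
  set N := U - 1 with hN
  have hev : Polynomial.eval (-1 : ℂ) N.charpoly = det (Matrix.scalar (Fin n) (-1 : ℂ) - N) := by
    rw [Matrix.charpoly, _root_.eval_det, Matrix.matPolyEquiv_charmatrix]
    simp
  have h1 : Polynomial.eval (-1 : ℂ) N.charpoly = (-1) ^ n := by
    rw [aux_charpoly_nilp N h]; simp
  have hsc : Matrix.scalar (Fin n) (-1 : ℂ) = (-1 : Matrix (Fin n) (Fin n) ℂ) := by
    rw [map_neg, _root_.map_one]
  have h2 : Matrix.scalar (Fin n) (-1 : ℂ) - N = -U := by rw [hsc, hN]; abel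
  rw [h2, Matrix.det_neg, Fintype.card_fin, h1] at hev
  have hne : ((-1 : ℂ)) ^ n ≠ 0 := pow_ne_zero _ (by norm_num)
  have h3 : (-1:ℂ)^n * U.det = (-1)^n * 1 := by rw [mul_one]; exact hev.symm
  exact mul_left_cancel₀ hne h3

attribute [local instance] Matrix.frobeniusNormedAddCommGroup Matrix.frobeniusNormedRing

private lemma aux_frob_sq {n : ℕ} (X : Matrix (Fin n) (Fin n) ℂ) :
    ‖X‖ ^ 2 = ∑ i, ∑ j, ‖X i j‖ ^ 2 := by
  have hnn : (0:ℝ) ≤ ∑ i, ∑ j, ‖X i j‖ ^ (2:ℝ) := by positivity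
  rw [Matrix.frobenius_norm_def, ← Real.rpow_natCast (_ ^ (1/2 : ℝ)) 2, ← Real.rpow_mul hnn]
  norm_num

private lemma aux_trace_eig {n : ℕ} (X : Matrix (Fin n) (Fin n) ℂ) :
    ∑ i, (Matrix.posSemidef_conjTranspose_mul_self X).1.eigenvalues i = ‖X‖ ^ 2 := by
  set hP := Matrix.posSemidef_conjTranspose_mul_self X
  have h1 : (Xᴴ * X).trace = ∑ i, ((hP.1.eigenvalues i : ℂ)) := by
    conv_lhs => rw [hP.1.spectral_theorem]
    rw [Unitary.conjStarAlgAut_apply, Matrix.trace_mul_cycle]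
    rw [Matrix.mem_unitaryGroup_iff'.mp (hP.1.eigenvectorUnitary).2, one_mul,
      Matrix.trace_diagonal]
    simp
  have h2 : (Xᴴ * X).trace = ((‖X‖ ^ 2 : ℝ) : ℂ) := by
    rw [aux_frob_sq, Matrix.trace]
    push_cast
    rw [Finset.sum_comm (γ := Fin n)]
    congr 1
    ext i
    rw [Matrix.diag_apply, Matrix.mul_apply]
    congr 1
    ext j
    rw [Matrix.conjTranspose_apply, Complex.star_def,
      ← Complex.normSq_eq_conj_mul_self, Complex.normSq_eq_norm_sq]
    simp
  rw [h1] at h2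
  exact_mod_cast h2

private lemma aux_det_eig {n : ℕ} (X : Matrix (Fin n) (Fin n) ℂ) :
    ∏ i, (Matrix.posSemidef_conjTranspose_mul_self X).1.eigenvalues i = ‖X.det‖ ^ 2 := by
  set hP := Matrix.posSemidef_conjTranspose_mul_self X
  have h1 : (Xᴴ * X).det = ∏ i, ((hP.1.eigenvalues i : ℂ)) := hP.1.det_eq_prod_eigenvalues
  have h2 : (Xᴴ * X).det = ((‖X.det‖ ^ 2 : ℝ) : ℂ) := by
    rw [Matrix.det_mul, Matrix.det_conjTranspose, Complex.star_def,
      ← Complex.normSq_eq_conj_mul_self, Complex.normSq_eq_norm_sq]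
  rw [h1] at h2
  exact_mod_cast h2

private lemma aux_sv_bounds {n : ℕ} (hn : 0 < n) (X : Matrix (Fin n) (Fin n) ℂ)
    (hX : IsUnit X.det) :
    ‖X.det‖ / ‖X‖ ^ (n - 1) ≤ sMin X ∧ sMin X ≤ sMax X ∧ sMax X ≤ ‖X‖ := by
  haveI : Nonempty (Fin n) := ⟨⟨0, hn⟩⟩
  set hP := Matrix.posSemidef_conjTranspose_mul_self X
  set eig := hP.1.eigenvalues with heig
  have hnn : ∀ i, 0 ≤ eig i := hP.eigenvalues_nonneg
  have hsum : ∑ i, eig i = ‖X‖ ^ 2 := aux_trace_eig X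
  have hprod : ∏ i, eig i = ‖X.det‖ ^ 2 := aux_det_eig X
  have hdetpos : 0 < ‖X.det‖ := by
    rw [norm_pos_iff]
    exact hX.ne_zero
  have hprodpos : 0 < ∏ i, eig i := by rw [hprod]; positivity
  have hpos : ∀ i, 0 < eig i := by
    intro i
    rcases (hnn i).lt_or_eq with h | h
    · exact h
    · exfalso
      have : ∏ j, eig j = 0 := Finset.prod_eq_zero (Finset.mem_univ i) h.symm
      rw [this] at hprodpos; exact lt_irrefl _ hprodpos
  have hle : ∀ i, eig i ≤ ‖X‖ ^ 2 := by
    intro i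
    rw [← hsum]
    exact Finset.single_le_sum (fun j _ => hnn j) (Finset.mem_univ i)
  have hXpos : 0 < ‖X‖ := by
    by_contra hc
    push_neg at hc
    have h0 : ‖X‖ = 0 := le_antisymm hc (norm_nonneg X)
    have := (hpos (Classical.arbitrary _)).trans_le (hle _)
    rw [h0] at this; norm_num at this
  have hsqle : ∀ i, Real.sqrt (eig i) ≤ ‖X‖ := by
    intro i
    calc Real.sqrt (eig i) ≤ Real.sqrt (‖X‖ ^ 2) := Real.sqrt_le_sqrt (hle i)
    _ = ‖X‖ := Real.sqrt_sq (norm_nonneg X)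
  have hmax : sMax X ≤ ‖X‖ := ciSup_le hsqle
  have hminmax : sMin X ≤ sMax X := by
    calc sMin X ≤ Real.sqrt (eig (Classical.arbitrary _)) :=
          ciInf_le (Set.Finite.bddBelow (Set.finite_range _)) _
    _ ≤ sMax X := le_ciSup (f := fun i => Real.sqrt (eig i))
          (Set.Finite.bddAbove (Set.finite_range _)) _
  refine ⟨?_, hminmax, hmax⟩
  apply le_ciInf
  intro i
  have hkey : ‖X.det‖ ^ 2 / (‖X‖ ^ 2) ^ (n - 1) ≤ eig i := by
    have hmul : eig i * ∏ j ∈ Finset.univ.erase i, eig j = ∏ j, eig j :=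
      Finset.mul_prod_erase Finset.univ eig (Finset.mem_univ i)
    have hPe : ∏ j ∈ Finset.univ.erase i, eig j ≤ (‖X‖ ^ 2) ^ (n - 1) := by
      calc ∏ j ∈ Finset.univ.erase i, eig j ≤ ∏ _j ∈ Finset.univ.erase i, ‖X‖ ^ 2 :=
            Finset.prod_le_prod (fun j _ => hnn j) (fun j _ => hle j)
      _ = (‖X‖ ^ 2) ^ (n - 1) := by
          rw [Finset.prod_const, Finset.card_erase_of_mem (Finset.mem_univ i)]
          simp
    have hPepos : 0 < ∏ j ∈ Finset.univ.erase i, eig j :=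
      Finset.prod_pos (fun j _ => hpos j)
    rw [div_le_iff₀ (by positivity)]
    calc ‖X.det‖ ^ 2 = eig i * ∏ j ∈ Finset.univ.erase i, eig j := by rw [hmul, hprod]
    _ ≤ eig i * (‖X‖ ^ 2) ^ (n - 1) := by
        exact mul_le_mul_of_nonneg_left hPe (hnn i)
  calc ‖X.det‖ / ‖X‖ ^ (n - 1) = Real.sqrt (‖X.det‖ ^ 2 / (‖X‖ ^ 2) ^ (n - 1)) := by
        rw [Real.sqrt_div (by positivity), Real.sqrt_sq hdetpos.le, ← pow_mul, mul_comm 2 (n-1),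
          pow_mul, Real.sqrt_sq (by positivity)]
  _ ≤ Real.sqrt (eig i) := Real.sqrt_le_sqrt hkey

private lemma aux_log_inv_lim (c : ℝ) (hc : 0 < c) (K : ℝ) :
    Tendsto (fun m : ℕ => Real.log (c * ((m:ℝ)+1) ^ K) * ((m:ℝ))⁻¹) atTop (𝓝 0) := by
  have hx : ∀ m : ℕ, (0:ℝ) < (m:ℝ) + 1 := fun m => by positivity
  have heq : ∀ m : ℕ, Real.log (c * ((m:ℝ)+1) ^ K) * ((m:ℝ))⁻¹
      = Real.log c * ((m:ℝ))⁻¹ + K * (Real.log ((m:ℝ)+1) * ((m:ℝ))⁻¹) := by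
    intro m
    rw [Real.log_mul hc.ne' (by positivity), Real.log_rpow (hx m)]
    ring
  simp only [heq]
  have hinv : Tendsto (fun m : ℕ => ((m:ℝ))⁻¹) atTop (𝓝 0) :=
    tendsto_inv_atTop_nhds_zero_nat
  have h1 : Tendsto (fun m : ℕ => Real.log c * ((m:ℝ))⁻¹) atTop (𝓝 0) := by
    simpa using hinv.const_mul (Real.log c)
  have hlog : Tendsto (fun m : ℕ => Real.log ((m:ℝ)+1) * ((m:ℝ))⁻¹) atTop (𝓝 0) := by
    have hd : Tendsto (fun x : ℝ => Real.log x / x) atTop (𝓝 0) :=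
      Real.isLittleO_log_id_atTop.tendsto_div_nhds_zero
    have hcomp : Tendsto (fun m : ℕ => Real.log ((m:ℝ)+1) / ((m:ℝ)+1)) atTop (𝓝 0) :=
      hd.comp (tendsto_atTop_add_const_right atTop 1 tendsto_natCast_atTop_atTop)
    have h2 : Tendsto (fun m : ℕ => 2 * (Real.log ((m:ℝ)+1) / ((m:ℝ)+1))) atTop (𝓝 0) := by
      simpa using hcomp.const_mul 2
    apply squeeze_zero' (g := fun m : ℕ => 2 * (Real.log ((m:ℝ)+1) / ((m:ℝ)+1)))
    · filter_upwards [eventually_ge_atTop 1] with m hm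
      have hm1 : (1:ℝ) ≤ (m:ℝ) := by exact_mod_cast hm
      exact mul_nonneg (Real.log_nonneg (by linarith)) (by positivity)
    · filter_upwards [eventually_ge_atTop 1] with m hm
      have hm1 : (1:ℝ) ≤ (m:ℝ) := by exact_mod_cast hm
      have hlognn : 0 ≤ Real.log ((m:ℝ)+1) := Real.log_nonneg (by linarith)
      have hineq : ((m:ℝ))⁻¹ ≤ 2 / ((m:ℝ)+1) := by
        rw [inv_eq_one_div, div_le_div_iff₀ (by linarith) (by linarith)]
        linarith
      calc Real.log ((m:ℝ)+1) * ((m:ℝ))⁻¹ ≤ Real.log ((m:ℝ)+1) * (2 / ((m:ℝ)+1)) :=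
            mul_le_mul_of_nonneg_left hineq hlognn
      _ = 2 * (Real.log ((m:ℝ)+1) / ((m:ℝ)+1)) := by ring
    · exact h2
  simpa using h1.add (hlog.const_mul K)

private lemma aux_master_lim (c : ℝ) (hc : 0 < c) (K : ℝ) :
    Tendsto (fun m : ℕ => (c * ((m:ℝ)+1) ^ K) ^ ((m:ℝ)⁻¹)) atTop (𝓝 1) := by
  have hpos : ∀ m : ℕ, (0:ℝ) < c * ((m:ℝ)+1) ^ K := by
    intro m
    have : (0:ℝ) < (m:ℝ) + 1 := by positivity
    positivity
  have heq : ∀ m : ℕ, (c * ((m:ℝ)+1) ^ K) ^ ((m:ℝ)⁻¹)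
      = Real.exp (Real.log (c * ((m:ℝ)+1) ^ K) * ((m:ℝ))⁻¹) := by
    intro m
    rw [Real.rpow_def_of_pos (hpos m)]
  simp only [heq]
  have := (Real.continuous_exp.tendsto 0).comp (aux_log_inv_lim c hc K)
  rw [Real.exp_zero] at this
  exact this

private lemma aux_unip_pow_bound {n K : ℕ} (U : Matrix (Fin n) (Fin n) ℂ)
    (hK : (U - 1) ^ K = 0) (m : ℕ) :
    ‖U ^ m‖ ≤ ((m:ℝ)+1) ^ K * ∑ j ∈ Finset.range K, ‖(U - 1) ^ j‖ := by
  set N := U - 1 with hN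
  set D := ∑ j ∈ Finset.range K, ‖N ^ j‖ with hD
  have hNj : ∀ j, K ≤ j → N ^ j = 0 := by
    intro j hj
    rw [← Nat.add_sub_cancel' hj, pow_add, hK, zero_mul]
  have hbin : U ^ m = ∑ j ∈ Finset.range (m+1), N ^ j * 1 ^ (m-j) * (Nat.choose m j : Matrix (Fin n) (Fin n) ℂ) := by
    conv_lhs => rw [show U = N + 1 by rw [hN]; abel]
    exact Commute.add_pow (Commute.one_right N) m
  rw [hbin]
  calc ‖∑ j ∈ Finset.range (m+1), N ^ j * 1 ^ (m-j) * (Nat.choose m j : Matrix (Fin n) (Fin n) ℂ)‖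
      ≤ ∑ j ∈ Finset.range (m+1), ‖N ^ j * 1 ^ (m-j) * (Nat.choose m j : Matrix (Fin n) (Fin n) ℂ)‖ :=
        norm_sum_le _ _
    _ ≤ ∑ j ∈ Finset.range (m+1), ((m:ℝ)+1) ^ K * (if j < K then ‖N ^ j‖ else 0) := by
        apply Finset.sum_le_sum
        intro j hj
        have hterm : N ^ j * 1 ^ (m-j) * (Nat.choose m j : Matrix (Fin n) (Fin n) ℂ)
            = (Nat.choose m j) • N ^ j := by
          rw [one_pow, mul_one, ← (Nat.cast_commute (Nat.choose m j) (N ^ j)).eq, nsmul_eq_mul]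
        rw [hterm]
        by_cases hjK : j < K
        · simp only [hjK, if_true]
          calc ‖(Nat.choose m j) • N ^ j‖ ≤ (Nat.choose m j : ℝ) * ‖N ^ j‖ := norm_nsmul_le
            _ ≤ ((m:ℝ)+1) ^ K * ‖N ^ j‖ := by
                apply mul_le_mul_of_nonneg_right _ (norm_nonneg _)
                have h1 : Nat.choose m j ≤ (m+1) ^ K := by
                  calc Nat.choose m j ≤ m ^ j := Nat.choose_le_pow m j
                    _ ≤ (m+1) ^ j := Nat.pow_le_pow_left (Nat.le_succ m) j
                    _ ≤ (m+1) ^ K := Nat.pow_le_pow_right (Nat.succ_pos m) hjK.le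
                calc (Nat.choose m j : ℝ) ≤ ((m+1) ^ K : ℕ) := by exact_mod_cast h1
                  _ = ((m:ℝ)+1) ^ K := by push_cast; ring
        · simp only [hjK, if_false, mul_zero]
          rw [hNj j (not_lt.mp hjK), smul_zero, norm_zero]
    _ = ((m:ℝ)+1) ^ K * ∑ j ∈ Finset.range (m+1), (if j < K then ‖N ^ j‖ else 0) := by
        rw [Finset.mul_sum]
    _ ≤ ((m:ℝ)+1) ^ K * D := by
        apply mul_le_mul_of_nonneg_left _ (by positivity)
        rw [← Finset.sum_filter]
        apply Finset.sum_le_sum_of_subset_of_nonneg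
        · intro j hj
          simp only [Finset.mem_filter, Finset.mem_range] at hj ⊢
          exact hj.2
        · intro j _ _
          exact norm_nonneg _

private lemma aux_ell_pow_bound {n : ℕ} (P : Matrix (Fin n) (Fin n) ℂ) (t : Fin n → ℂ)
    (hP : IsUnit P.det) (ht : ∀ i, ‖t i‖ = 1) (m : ℕ) :
    ‖(P * Matrix.diagonal t * P⁻¹) ^ m‖ ≤ ‖P‖ * Real.sqrt n * ‖P⁻¹‖ := by
  have hpow : (P * Matrix.diagonal t * P⁻¹) ^ m = P * (Matrix.diagonal t) ^ m * P⁻¹ := by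
    induction m with
    | zero => simp [Matrix.mul_nonsing_inv P hP]
    | succ m ih =>
      rw [pow_succ, ih, pow_succ]
      have : P * Matrix.diagonal t ^ m * P⁻¹ * (P * Matrix.diagonal t * P⁻¹)
          = P * Matrix.diagonal t ^ m * (P⁻¹ * P) * Matrix.diagonal t * P⁻¹ := by
        noncomm_ring
      rw [this, Matrix.nonsing_inv_mul P hP, mul_one]
      simp [mul_assoc]
  rw [hpow, Matrix.diagonal_pow]
  have hdiag : ‖Matrix.diagonal (t ^ m)‖ ≤ Real.sqrt n := by
    have hsq : ‖Matrix.diagonal (t ^ m)‖ ^ 2 = (n : ℝ) := by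
      rw [aux_frob_sq]
      have : ∀ i : Fin n, ∑ j, ‖Matrix.diagonal (t ^ m) i j‖ ^ 2 = 1 := by
        intro i
        rw [Finset.sum_eq_single i]
        · simp [Matrix.diagonal_apply_eq, norm_pow, ht i]
        · intro j _ hji
          rw [Matrix.diagonal_apply_ne' _ hji]
          simp
        · intro h; exact absurd (Finset.mem_univ i) h
      simp only [this]
      simp
    have h1 : ‖Matrix.diagonal (t ^ m)‖ = Real.sqrt n := by
      rw [← hsq, Real.sqrt_sq (norm_nonneg _)]
    exact h1.le
  calc ‖P * Matrix.diagonal (t ^ m) * P⁻¹‖ ≤ ‖P * Matrix.diagonal (t ^ m)‖ * ‖P⁻¹‖ :=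
        Matrix.frobenius_norm_mul _ _
    _ ≤ ‖P‖ * ‖Matrix.diagonal (t ^ m)‖ * ‖P⁻¹‖ :=
        mul_le_mul_of_nonneg_right (Matrix.frobenius_norm_mul _ _) (norm_nonneg _)
    _ ≤ ‖P‖ * Real.sqrt n * ‖P⁻¹‖ := by
        apply mul_le_mul_of_nonneg_right _ (norm_nonneg _)
        exact mul_le_mul_of_nonneg_left hdiag (norm_nonneg _)

set_option maxHeartbeats 2000000 in
/-- For the CMJD `A = E H U` of an invertible `A` and invertible `B, M`,
`sₙ(B Eᵐ Uᵐ M)^{1/m} → 1` and `s₁(B Eᵐ Uᵐ M)^{1/m} → 1`. -/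
theorem sv_root_elliptic_unipotent_tendsto_one {n : ℕ} (hn : 0 < n)
    (A E H U B M : Matrix (Fin n) (Fin n) ℂ)
    (hA : IsUnit A.det) (hE : Elliptic E) (hH : Hyperbolic H) (hU : Unipotent U)
    (hEH : E * H = H * E) (hEU : E * U = U * E) (hHU : H * U = U * H)
    (hCMJD : A = E * H * U)
    (hB : IsUnit B.det) (hM : IsUnit M.det) :
    Tendsto (fun m : ℕ => sMin (B * E ^ m * U ^ m * M) ^ ((m : ℝ)⁻¹)) atTop (𝓝 1) ∧
      Tendsto (fun m : ℕ => sMax (B * E ^ m * U ^ m * M) ^ ((m : ℝ)⁻¹)) atTop (𝓝 1) := by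
  classical
  haveI : Nonempty (Fin n) := ⟨⟨0, hn⟩⟩
  obtain ⟨P, t, hPdet, ht, hEdef⟩ := hE
  have hdetU : U.det = 1 := aux_det_unipotent U hU
  obtain ⟨k0, hk0⟩ := hU
  set K := k0 + 1 with hKdef
  have hNK : (U - 1) ^ K = 0 := by rw [hKdef, pow_succ, hk0, zero_mul]
  set D := ∑ j ∈ Finset.range K, ‖(U - 1) ^ j‖ with hD
  set CE := ‖P‖ * Real.sqrt n * ‖P⁻¹‖ with hCE
  set X := fun m : ℕ => B * E ^ m * U ^ m * M with hX
  -- determinants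
  have hdetE : E.det = ∏ i, t i := by
    rw [hEdef, Matrix.det_mul, Matrix.det_mul, Matrix.det_diagonal,
      Matrix.det_nonsing_inv, Ring.inverse_eq_inv']
    field_simp [hPdet.ne_zero]
  have hdetEnorm : ‖E.det‖ = 1 := by
    rw [hdetE]
    rw [norm_prod]
    rw [Finset.prod_congr rfl (fun i _ => ht i)]
    simp
  set c := ‖B.det‖ * ‖M.det‖ with hc
  have hcpos : 0 < c := by
    apply mul_pos <;> (rw [norm_pos_iff]; first | exact hB.ne_zero | exact hM.ne_zero)
  have hdetX : ∀ m, ‖(X m).det‖ = c := by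
    intro m
    rw [hX]
    simp only
    rw [Matrix.det_mul, Matrix.det_mul, Matrix.det_mul, Matrix.det_pow, Matrix.det_pow,
      hdetU, one_pow, mul_one]
    rw [norm_mul, norm_mul, norm_pow, hdetEnorm, one_pow, mul_one]
  have hXunit : ∀ m, IsUnit (X m).det := by
    intro m
    rw [isUnit_iff_ne_zero, ← norm_pos_iff, hdetX m]
    exact hcpos
  set Cg := ‖B‖ * CE * D * ‖M‖ + 1 with hCg
  have hDnn : 0 ≤ D := Finset.sum_nonneg (fun j _ => norm_nonneg _)
  have hCEnn : 0 ≤ CE := by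
    rw [hCE]
    have := Real.sqrt_nonneg (n:ℝ)
    positivity
  have hCgpos : 0 < Cg := by
    have : 0 ≤ ‖B‖ * CE * D * ‖M‖ := by positivity
    rw [hCg]; linarith
  have hXb : ∀ m, ‖X m‖ ≤ Cg * ((m:ℝ)+1) ^ K := by
    intro m
    have hEb : ‖E ^ m‖ ≤ CE := by rw [hEdef, hCE]; exact aux_ell_pow_bound P t hPdet ht m
    have hUb : ‖U ^ m‖ ≤ ((m:ℝ)+1) ^ K * D := aux_unip_pow_bound U hNK m
    have hmp : (0:ℝ) ≤ ((m:ℝ)+1) ^ K := by positivity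
    calc ‖X m‖ ≤ ‖B * E ^ m * U ^ m‖ * ‖M‖ := Matrix.frobenius_norm_mul _ _
      _ ≤ ‖B * E ^ m‖ * ‖U ^ m‖ * ‖M‖ :=
          mul_le_mul_of_nonneg_right (Matrix.frobenius_norm_mul _ _) (norm_nonneg _)
      _ ≤ ‖B‖ * ‖E ^ m‖ * ‖U ^ m‖ * ‖M‖ := by
          apply mul_le_mul_of_nonneg_right _ (norm_nonneg _)
          exact mul_le_mul_of_nonneg_right
            (Matrix.frobenius_norm_mul _ _) (norm_nonneg _)
      _ ≤ ‖B‖ * CE * (((m:ℝ)+1) ^ K * D) * ‖M‖ := by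
          apply mul_le_mul_of_nonneg_right _ (norm_nonneg _)
          apply mul_le_mul
          · exact mul_le_mul_of_nonneg_left hEb (norm_nonneg _)
          · exact hUb
          · exact norm_nonneg _
          · positivity
      _ = (‖B‖ * CE * D * ‖M‖) * ((m:ℝ)+1) ^ K := by ring
      _ ≤ Cg * ((m:ℝ)+1) ^ K := by
          apply mul_le_mul_of_nonneg_right _ hmp
          rw [hCg]; linarith
  -- squeeze bounds
  have hGpos : ∀ m : ℕ, (0:ℝ) < Cg * ((m:ℝ)+1) ^ K := by
    intro m
    have : (0:ℝ) < ((m:ℝ)+1) := by positivity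
    positivity
  have hbounds : ∀ m : ℕ, c / (Cg * ((m:ℝ)+1) ^ K) ^ (n-1) ≤ sMin (X m)
      ∧ sMin (X m) ≤ sMax (X m) ∧ sMax (X m) ≤ Cg * ((m:ℝ)+1) ^ K := by
    intro m
    obtain ⟨h1, h2, h3⟩ := aux_sv_bounds hn (X m) (hXunit m)
    refine ⟨?_, h2, h3.trans (hXb m)⟩
    refine le_trans ?_ h1
    rw [hdetX m]
    have hXpos : 0 < ‖X m‖ := by
      rw [norm_pos_iff]
      intro h0
      have := hXunit m
      rw [h0, Matrix.det_zero] at this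
      exact this.ne_zero rfl
    gcongr
    exact hXb m
  -- limit functions
  have hupper_lim : Tendsto (fun m : ℕ => (Cg * ((m:ℝ)+1) ^ K) ^ ((m:ℝ)⁻¹)) atTop (𝓝 1) := by
    have := aux_master_lim Cg hCgpos (K : ℝ)
    refine this.congr (fun m => ?_)
    rw [Real.rpow_natCast]
  have hlower_lim : Tendsto
      (fun m : ℕ => (c / (Cg * ((m:ℝ)+1) ^ K) ^ (n-1)) ^ ((m:ℝ)⁻¹)) atTop (𝓝 1) := by
    have hcc : 0 < c / Cg ^ (n-1) := by positivity
    have := aux_master_lim (c / Cg ^ (n-1)) hcc (-(K * (n-1) : ℕ) : ℝ)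
    refine this.congr (fun m => ?_)
    congr 1
    have hm1 : (0:ℝ) < (m:ℝ) + 1 := by positivity
    rw [Real.rpow_neg hm1.le, Real.rpow_natCast, mul_pow, ← pow_mul, ← div_div,
      div_eq_mul_inv (c / Cg ^ (n-1))]
  have hlow_le : ∀ m : ℕ, (c / (Cg * ((m:ℝ)+1) ^ K) ^ (n-1)) ^ ((m:ℝ)⁻¹)
      ≤ sMin (X m) ^ ((m:ℝ)⁻¹) := by
    intro m
    apply Real.rpow_le_rpow (by positivity) (hbounds m).1 (by positivity)
  have hmid_le : ∀ m : ℕ, sMin (X m) ^ ((m:ℝ)⁻¹) ≤ sMax (X m) ^ ((m:ℝ)⁻¹) := by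
    intro m
    have h0 : 0 ≤ sMin (X m) :=
      le_trans (by positivity) (hbounds m).1
    exact Real.rpow_le_rpow h0 (hbounds m).2.1 (by positivity)
  have hup_le : ∀ m : ℕ, sMax (X m) ^ ((m:ℝ)⁻¹) ≤ (Cg * ((m:ℝ)+1) ^ K) ^ ((m:ℝ)⁻¹) := by
    intro m
    have h0 : 0 ≤ sMax (X m) :=
      le_trans (le_trans (by positivity) (hbounds m).1) (hbounds m).2.1
    exact Real.rpow_le_rpow h0 (hbounds m).2.2 (by positivity)
  constructor
  · exact tendsto_of_tendsto_of_tendsto_of_le_of_le hlower_lim hupper_lim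
      hlow_le (fun m => (hmid_le m).trans (hup_le m))
  · exact tendsto_of_tendsto_of_tendsto_of_le_of_le hlower_lim hupper_lim
      (fun m => (hlow_le m).trans (hmid_le m)) hup_le
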